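/- arXiv:2107.13933 — 2 statements merged into one kernel-verified Lean document; each statement's English description precedes it below -/
import Mathlib

section
/- Let α₁, α₂ be nonzero complex constants with α₁ ≠ α₂. If f is an entire function, not identically zero, satisfying α₁α₂f(z)² − 2(α₁+α₂)f(z)f'(z) + 2f(z)f''(z) + 2f'(z)² = 0 for all z ∈ ℂ, then there is a nonzero complex constant c such that either f(z) = c·e^{α₁ z/2} for all z, or f(z) = c·e^{α₂ z/2} for all z. In particular f has no zeros. -/
/-!
Since `(f²)'' = 2 f'² + 2 f f''`, the equation says exactly that `g = f²` solves the constant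
coefficient equation `g'' - (α₁ + α₂) g' + α₁ α₂ g = 0`, so `g = A e^{α₁ z} + B e^{α₂ z}`.
At a zero of `f` both `g` and `g' = 2 f f'` vanish, which forces `A = B = 0`; hence `f` has no
zeros. If `A` and `B` were both nonzero, `g` would vanish where `e^{(α₁ - α₂) z} = -B / A`; so
`f² = A e^{α z}` for one of the `α = αᵢ`, and then `2 f f' = α f²` gives `f' = (α / 2) f`.
-/

open Complex

theorem eq_mul_exp_of_deriv_eq_mul {a : ℂ} {h : ℂ → ℂ} (hd : Differentiable ℂ h)
    (hode : ∀ z, deriv h z = a * h z) (z : ℂ) : h z = h 0 * exp (a * z) := by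
  have hderiv : ∀ w, HasDerivAt (fun w => h w * exp (-a * w)) 0 w := by
    intro w
    have hexp : HasDerivAt (fun w => exp (-a * w)) (exp (-a * w) * -a) w := by
      simpa using ((hasDerivAt_id w).const_mul (-a)).cexp
    have hh : HasDerivAt h (a * h w) w := hode w ▸ (hd w).hasDerivAt
    exact (hh.mul hexp).congr_deriv (by ring)
  have hconst := is_const_of_deriv_eq_zero (fun w => (hderiv w).differentiableAt)
    (fun w => (hderiv w).deriv) z 0
  simp only [mul_zero, exp_zero, mul_one] at hconst
  rw [← hconst, mul_assoc, ← exp_add]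
  simp

section
variable {𝕜 : Type*} [NontriviallyNormedField 𝕜] {f : 𝕜 → 𝕜}

theorem deriv_fun_sq (hf : Differentiable 𝕜 f) :
    deriv (fun z => f z ^ 2) = fun z => 2 * f z * deriv f z := by
  ext z
  simpa using ((hf z).hasDerivAt.fun_pow 2).deriv

theorem deriv_deriv_fun_sq (hf : Differentiable 𝕜 f) (hf' : Differentiable 𝕜 (deriv f)) (z : 𝕜) :
    deriv (deriv fun z => f z ^ 2) z = 2 * deriv f z ^ 2 + 2 * f z * deriv (deriv f) z := by
  rw [deriv_fun_sq hf]
  exact (((hf z).hasDerivAt.const_mul 2).mul (hf' z).hasDerivAt).deriv.trans (by ring)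

end

theorem exists_eq_exp_add_exp_of_deriv_deriv {a b : ℂ} (hab : a ≠ b) {g : ℂ → ℂ}
    (hg : Differentiable ℂ g)
    (hode : ∀ z, deriv (deriv g) z - (a + b) * deriv g z + a * b * g z = 0) :
    ∃ A B : ℂ, ∀ z, g z = A * exp (a * z) + B * exp (b * z) := by
  have hg' : Differentiable ℂ (deriv g) := hg.deriv
  -- `g' - a g` solves `h' = b h`, and symmetrically; eliminating `g'` leaves `g`.
  have reduce : ∀ a b : ℂ, (∀ z, deriv (deriv g) z - (a + b) * deriv g z + a * b * g z = 0) →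
      ∀ z, deriv g z - a * g z = (deriv g 0 - a * g 0) * exp (b * z) := by
    intro a b hode
    refine eq_mul_exp_of_deriv_eq_mul (hg'.sub (hg.const_mul a)) fun z => ?_
    refine ((hg' z).hasDerivAt.sub ((hg z).hasDerivAt.const_mul a)).deriv.trans ?_
    linear_combination hode z
  have hsub : b - a ≠ 0 := sub_ne_zero.mpr hab.symm
  refine ⟨-(deriv g 0 - b * g 0) / (b - a), (deriv g 0 - a * g 0) / (b - a), fun z => ?_⟩
  have ha := reduce a b hode z
  have hb := reduce b a (fun z => by linear_combination hode z) z
  have hscaled : (b - a) * g z = -(deriv g 0 - b * g 0) * exp (a * z)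
      + (deriv g 0 - a * g 0) * exp (b * z) := by
    linear_combination ha - hb
  rw [div_mul_eq_mul_div, div_mul_eq_mul_div, ← add_div, eq_div_iff hsub]
  linear_combination hscaled

theorem eq_zero_and_eq_zero_of_exp_add_exp_double_zero {a b A B z₀ : ℂ} (hab : a ≠ b)
    {g : ℂ → ℂ} (hg : ∀ z, g z = A * exp (a * z) + B * exp (b * z)) (hz₀ : g z₀ = 0)
    (hz₀' : deriv g z₀ = 0) : A = 0 ∧ B = 0 := by
  have hderiv : deriv g z₀ = a * A * exp (a * z₀) + b * B * exp (b * z₀) := by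
    rw [funext hg]
    have hexp : ∀ c : ℂ, HasDerivAt (fun z => exp (c * z)) (c * exp (c * z₀)) z₀ := fun c => by
      simpa [mul_comm] using ((hasDerivAt_id z₀).const_mul c).cexp
    exact (((hexp a).const_mul A).add ((hexp b).const_mul B)).deriv.trans (by ring)
  rw [hg] at hz₀
  rw [hderiv] at hz₀'
  have hA : (a - b) * (A * exp (a * z₀)) = 0 := by linear_combination hz₀' - b * hz₀
  have hB : (b - a) * (B * exp (b * z₀)) = 0 := by linear_combination hz₀' - a * hz₀
  simpa [sub_eq_zero, hab, hab.symm, exp_ne_zero] using And.intro hA hB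

theorem exists_exp_add_exp_eq_zero {a b A B : ℂ} (hab : a ≠ b) (hA : A ≠ 0) (hB : B ≠ 0) :
    ∃ z, A * exp (a * z) + B * exp (b * z) = 0 := by
  obtain ⟨w, hw⟩ : -B / A ∈ Set.range exp := by
    rw [range_exp]
    exact div_ne_zero (neg_ne_zero.mpr hB) hA
  have hsub : a - b ≠ 0 := sub_ne_zero.mpr hab
  refine ⟨w / (a - b), ?_⟩
  have hsplit : exp (a * (w / (a - b))) = exp w * exp (b * (w / (a - b))) := by
    rw [← exp_add]
    congr 1
    field_simp
    ring
  rw [hsplit, hw]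
  field_simp
  ring

theorem eq_mul_exp_half_of_sq_eq {a A : ℂ} {f : ℂ → ℂ} (hf : Differentiable ℂ f)
    (hf0 : ∀ z, f z ≠ 0) (hsq : ∀ z, f z ^ 2 = A * exp (a * z)) (z : ℂ) :
    f z = f 0 * exp (a * z / 2) := by
  rw [mul_div_right_comm]
  refine eq_mul_exp_of_deriv_eq_mul hf (fun w => ?_) z
  have hderiv : 2 * f w * deriv f w = a * f w ^ 2 := by
    have h1 := congrFun (deriv_fun_sq hf) w
    have h2 : HasDerivAt (fun z => A * exp (a * z)) (a * (A * exp (a * w))) w := by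
      simpa [mul_comm, mul_left_comm] using (((hasDerivAt_id w).const_mul a).cexp).const_mul A
    rw [funext hsq, h2.deriv] at h1
    linear_combination -h1 - a * hsq w
  apply mul_left_cancel₀ (mul_ne_zero two_ne_zero (hf0 w))
  linear_combination hderiv

theorem psi_vanishing_forces_exponential_general
    (α₁ α₂ : ℂ) (hαα : α₁ ≠ α₂)
    (f : ℂ → ℂ) (hf : Differentiable ℂ f) (hf0 : f ≠ fun _ => 0)
    (heq : ∀ z : ℂ, α₁ * α₂ * f z ^ 2 - 2 * (α₁ + α₂) * f z * deriv f z
        + 2 * f z * deriv (deriv f) z + 2 * (deriv f z) ^ 2 = 0) :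
    (∃ c : ℂ, c ≠ 0 ∧
      ((∀ z : ℂ, f z = c * Complex.exp (α₁ * z / 2)) ∨
       (∀ z : ℂ, f z = c * Complex.exp (α₂ * z / 2)))) ∧
    ∀ z : ℂ, f z ≠ 0 := by
  have hd := deriv_fun_sq hf
  obtain ⟨A, B, hAB⟩ := exists_eq_exp_add_exp_of_deriv_deriv hαα (g := fun z => f z ^ 2)
    (hf.pow 2) fun z => by rw [deriv_deriv_fun_sq hf hf.deriv, hd]; linear_combination heq z
  have hnz : ∀ z, f z ≠ 0 := by
    intro z₀ hz₀
    obtain ⟨rfl, rfl⟩ := eq_zero_and_eq_zero_of_exp_add_exp_double_zero hαα (z₀ := z₀) hAB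
      (by simp [hz₀]) (by simp [hd, hz₀])
    exact hf0 (funext fun z => by simpa using hAB z)
  refine ⟨⟨f 0, hnz 0, ?_⟩, hnz⟩
  by_cases hA : A = 0
  · exact Or.inr <| eq_mul_exp_half_of_sq_eq hf hnz fun z => by simpa [hA] using hAB z
  by_cases hB : B = 0
  · exact Or.inl <| eq_mul_exp_half_of_sq_eq hf hnz fun z => by simpa [hB] using hAB z
  obtain ⟨z₀, hz₀⟩ := exists_exp_add_exp_eq_zero hαα hA hB
  exact absurd (pow_eq_zero_iff two_ne_zero |>.mp ((hAB z₀).trans hz₀)) (hnz z₀)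

theorem psi_vanishing_forces_exponential
    (α₁ α₂ : ℂ) (hα₁ : α₁ ≠ 0) (hα₂ : α₂ ≠ 0) (hαα : α₁ ≠ α₂)
    (f : ℂ → ℂ) (hf : Differentiable ℂ f) (hf0 : f ≠ fun _ => 0)
    (heq : ∀ z : ℂ, α₁ * α₂ * f z ^ 2 - 2 * (α₁ + α₂) * f z * deriv f z
        + 2 * f z * deriv (deriv f) z + 2 * (deriv f z) ^ 2 = 0) :
    (∃ c : ℂ, c ≠ 0 ∧
      ((∀ z : ℂ, f z = c * Complex.exp (α₁ * z / 2)) ∨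
       (∀ z : ℂ, f z = c * Complex.exp (α₂ * z / 2)))) ∧
    ∀ z : ℂ, f z ≠ 0 :=
  psi_vanishing_forces_exponential_general α₁ α₂ hαα f hf hf0 heq
end

section
/- Let α₁, α₂ be complex constants with α₁ ≠ α₂. Let f be an entire function, not identically zero, such that the meromorphic function s = f'/f satisfies s'(z) + 2s(z)² − (α₁+α₂)s(z) + α₁α₂/2 = 0 at every point z where f(z) ≠ 0. Then s is constant: either s ≡ α₁/2 or s ≡ α₂/2. In particular f has no zeros (any nonconstant solution s of this Riccati equation would force f to have a zero at which the residue of f'/f equals 1/2, which is impossible since such residues are positive integers). -/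
/-!
Write `s = f'/f` and `g = f²`. Multiplying the Riccati equation by `2 f²` turns it into the linear
equation `g'' - (α₁ + α₂) g' + α₁ α₂ g = 0` wherever `f ≠ 0`, hence everywhere since both sides are
entire and `f ≢ 0`. Its solutions satisfy `g' - α₁ g = c e^{α₂ z}` and `g' - α₂ g = d e^{α₁ z}`.
If `c` and `d` were both nonzero, `(α₂ - α₁) g = c e^{α₂ z} - d e^{α₁ z}` would vanish somewhere;
there `f = 0`, so `g' = 2 f f' = 0` as well, forcing `c e^{α₂ z} = 0`. So one of them, say `c`,
vanishes: then `2 f f' = α₁ f²`, and `f` has no zeros because `(α₂ - α₁) f² = -d e^{α₁ z}` with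
`d ≠ 0`, so `f'/f = α₁/2`.
-/

open Complex

theorem eq_mul_exp_of_hasDerivAt {h : ℂ → ℂ} {b : ℂ} (hh : ∀ z, HasDerivAt h (b * h z) z)
    (z : ℂ) : h z = h 0 * exp (b * z) := by
  have hderiv : ∀ w, HasDerivAt (fun w => h w * exp (-b * w)) 0 w := fun w => by
    have hexp : HasDerivAt (fun w => exp (-b * w)) (exp (-b * w) * -b) w := by
      simpa using ((hasDerivAt_id w).const_mul (-b)).cexp
    exact ((hh w).fun_mul hexp).congr_deriv (by ring)
  have hconst := is_const_of_deriv_eq_zero (fun w => (hderiv w).differentiableAt)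
    (fun w => (hderiv w).deriv) z 0
  calc h z = h z * exp (-b * z) * exp (b * z) := by
        rw [mul_assoc, ← exp_add]; simp
    _ = h 0 * exp (b * z) := by rw [hconst]; simp

theorem sub_mul_eq_mul_exp_of_linear_ode {g g' g'' : ℂ → ℂ} {a b : ℂ}
    (hg : ∀ z, HasDerivAt g (g' z) z) (hg' : ∀ z, HasDerivAt g' (g'' z) z)
    (hode : ∀ z, g'' z - (a + b) * g' z + a * b * g z = 0) (z : ℂ) :
    g' z - a * g z = (g' 0 - a * g 0) * exp (b * z) :=
  eq_mul_exp_of_hasDerivAt (h := fun z => g' z - a * g z)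
    (fun z => ((hg' z).sub ((hg z).const_mul a)).congr_deriv (by linear_combination hode z)) z

theorem exists_mul_exp_eq_mul_exp {a b c d : ℂ} (hab : a ≠ b) (hc : c ≠ 0) (hd : d ≠ 0) :
    ∃ z, c * exp (b * z) = d * exp (a * z) := by
  have hba : b - a ≠ 0 := sub_ne_zero.mpr hab.symm
  refine ⟨log (d / c) / (b - a), ?_⟩
  set z := log (d / c) / (b - a)
  have hz : exp ((b - a) * z) = d / c := by
    rw [mul_div_cancel₀ _ hba, exp_log (div_ne_zero hd hc)]
  calc c * exp (b * z) = c * exp ((b - a) * z) * exp (a * z) := by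
        rw [mul_assoc, ← exp_add, sub_mul, sub_add_cancel]
    _ = d * exp (a * z) := by rw [hz, mul_div_cancel₀ _ hc]

section SquareOde

variable {f f' : ℂ → ℂ} {a b c d : ℂ}

theorem eq_zero_or_eq_zero_of_two_mul_sub_mul_sq_eq (hab : a ≠ b)
    (hc : ∀ z, 2 * f z * f' z - a * f z ^ 2 = c * exp (b * z))
    (hd : ∀ z, 2 * f z * f' z - b * f z ^ 2 = d * exp (a * z)) : c = 0 ∨ d = 0 := by
  by_contra! hcd
  obtain ⟨z, hz⟩ := exists_mul_exp_eq_mul_exp hab hcd.1 hcd.2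
  have hsq : (b - a) * f z ^ 2 = 0 := by linear_combination hc z - hd z + hz
  have hfz : f z = 0 := by simpa [sub_eq_zero, hab.symm] using hsq
  have := hc z
  simp [hfz, hcd.1, exp_ne_zero] at this

theorem div_eq_half_and_ne_zero_of_two_mul_sub_mul_sq_eq (hab : a ≠ b)
    (hf0 : f ≠ fun _ => 0)
    (hc : ∀ z, 2 * f z * f' z - a * f z ^ 2 = 0)
    (hd : ∀ z, 2 * f z * f' z - b * f z ^ 2 = d * exp (a * z)) :
    (∀ z, f' z / f z = a / 2) ∧ ∀ z, f z ≠ 0 := by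
  have hne : ∀ z, f z ≠ 0 := by
    intro z hfz
    have hd0 : d = 0 := by simpa [hfz, exp_ne_zero] using (hd z).symm
    refine hf0 (funext fun w => ?_)
    have hsq : (b - a) * f w ^ 2 = 0 := by linear_combination hc w - hd w - exp (a * w) * hd0
    simpa [sub_eq_zero, hab.symm] using hsq
  refine ⟨fun z => ?_, hne⟩
  rw [div_eq_iff (hne z)]
  have hfac : f z * (2 * f' z - a * f z) = 0 := by linear_combination hc z
  linear_combination (mul_eq_zero.mp hfac).resolve_left (hne z) / 2

end SquareOde

section Riccati

variable {f : ℂ → ℂ} {a b : ℂ}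

theorem two_mul_sq_mul_riccati (hf : Differentiable ℂ f) {z : ℂ} (hz : f z ≠ 0) :
    2 * f z ^ 2 * (deriv (fun w => deriv f w / f w) z + 2 * (deriv f z / f z) ^ 2
        - (a + b) * (deriv f z / f z) + a * b / 2)
      = 2 * (deriv f z ^ 2 + f z * deriv (deriv f) z) - (a + b) * (2 * f z * deriv f z)
        + a * b * f z ^ 2 := by
  rw [((hf.deriv z).hasDerivAt.fun_div (hf z).hasDerivAt hz).deriv]
  field_simp
  ring

theorem sq_linear_ode_of_riccati (hf : Differentiable ℂ f) (hf0 : f ≠ fun _ => 0)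
    (hric : ∀ z : ℂ, f z ≠ 0 →
      deriv (fun w => deriv f w / f w) z + 2 * (deriv f z / f z) ^ 2
        - (a + b) * (deriv f z / f z) + a * b / 2 = 0) (z : ℂ) :
    2 * (deriv f z ^ 2 + f z * deriv (deriv f) z) - (a + b) * (2 * f z * deriv f z)
      + a * b * f z ^ 2 = 0 := by
  have hf' := hf.deriv
  have hf'' := hf'.deriv
  have hE : Differentiable ℂ fun z => 2 * (deriv f z ^ 2 + f z * deriv (deriv f) z)
      - (a + b) * (2 * f z * deriv f z) + a * b * f z ^ 2 := by fun_prop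
  have hmul : ∀ z ∈ Set.univ, (2 * (deriv f z ^ 2 + f z * deriv (deriv f) z)
      - (a + b) * (2 * f z * deriv f z) + a * b * f z ^ 2) * f z = 0 := by
    intro z _
    by_cases hz : f z = 0
    · rw [hz, mul_zero]
    · rw [← two_mul_sq_mul_riccati hf hz, hric z hz, mul_zero, zero_mul]
  refine ((AnalyticOnNhd.eq_zero_or_eq_zero_of_mul_eq_zero (fun z _ => hE.analyticAt z)
    (fun z _ => hf.analyticAt z) hmul isPreconnected_univ).resolve_right fun h => hf0 ?_) z trivial
  exact funext fun w => h w trivial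

end Riccati

theorem riccati_logarithmic_derivative_constant
    (α₁ α₂ : ℂ) (hαα : α₁ ≠ α₂)
    (f : ℂ → ℂ) (hf : Differentiable ℂ f) (hf0 : f ≠ fun _ => 0)
    (hric : ∀ z : ℂ, f z ≠ 0 →
      deriv (fun w => deriv f w / f w) z + 2 * (deriv f z / f z) ^ 2
        - (α₁ + α₂) * (deriv f z / f z) + α₁ * α₂ / 2 = 0) :
    ((∀ z : ℂ, deriv f z / f z = α₁ / 2) ∨ (∀ z : ℂ, deriv f z / f z = α₂ / 2)) ∧
    ∀ z : ℂ, f z ≠ 0 := by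
  have hode := sq_linear_ode_of_riccati hf hf0 hric
  have hg : ∀ z, HasDerivAt (fun w => f w ^ 2) (2 * f z * deriv f z) z := fun z => by
    simpa using (hf z).hasDerivAt.fun_pow 2
  have hg' : ∀ z, HasDerivAt (fun w => 2 * f w * deriv f w)
      (2 * (deriv f z ^ 2 + f z * deriv (deriv f) z)) z := fun z =>
    (((hf z).hasDerivAt.const_mul 2).fun_mul (hf.deriv z).hasDerivAt).congr_deriv (by ring)
  have hc := sub_mul_eq_mul_exp_of_linear_ode hg hg' hode
  have hd := sub_mul_eq_mul_exp_of_linear_ode (a := α₂) (b := α₁) hg hg' fun z => by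
    linear_combination hode z
  rcases eq_zero_or_eq_zero_of_two_mul_sub_mul_sq_eq hαα hc hd with h | h
  · simp only [h, zero_mul] at hc
    exact (div_eq_half_and_ne_zero_of_two_mul_sub_mul_sq_eq hαα hf0 hc hd).imp_left Or.inl
  · simp only [h, zero_mul] at hd
    exact (div_eq_half_and_ne_zero_of_two_mul_sub_mul_sq_eq hαα.symm hf0 hd hc).imp_left Or.inr
end
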